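/- Let p be a probability mass function on a finite type 𝒳 with p(x) > 0 for all x. Then there exists a prefix-free binary code c : 𝒳 → List Bool (for distinct x, y, c(x) is not a prefix of c(y)) whose expected codeword length satisfies Σ_x p(x)·|c(x)| < H(p) + 1, where H(p) is the Shannon entropy (base 2) of p. -/

import Mathlib

/-- Shannon entropy (base 2) of a pmf on a finite type. -/
noncomputable def shannonEntropyFin {𝒳 : Type*} [Fintype 𝒳] (p : 𝒳 → ℝ) : ℝ :=
  ∑ x, -(p x * Real.logb 2 (p x))

/-!
The Shannon lengths `ℓ x = ⌈-log₂ p x⌉` satisfy Kraft's inequality `∑ 2 ^ (-ℓ x) ≤ ∑ p x = 1`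
and `ℓ x < -log₂ p x + 1`, so it suffices to realise them by a prefix-free code. List the symbols
by increasing length, let `N x = ∑_{y < x} 2 ^ (L - ℓ y)`, and take the first `ℓ x` of the `L`
bits of `N x` as the codeword of `x`. If `c x` were a prefix of `c y`, then `N x` and `N y` would
agree in their first `ℓ x` bits, hence differ by less than `2 ^ (L - ℓ x)`; but the intervals
`[N x, N x + 2 ^ (L - ℓ x))` are disjoint and the earlier symbol has the shorter codeword.
-/

open Finset

def highBits (L a m : ℕ) : List Bool :=
  List.ofFn fun i : Fin a => m.testBit (L - 1 - i)

@[simp]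
lemma length_highBits (L a m : ℕ) : (highBits L a m).length = a := by
  simp [highBits]

lemma div_eq_div_of_highBits_prefix {L a b m m' : ℕ} (hb : b ≤ L) (hm : m < 2 ^ L)
    (hm' : m' < 2 ^ L) (h : highBits L a m <+: highBits L b m') :
    m / 2 ^ (L - a) = m' / 2 ^ (L - a) := by
  have hab : a ≤ b := by simpa using h.length_le
  refine Nat.eq_of_testBit_eq fun j => ?_
  rw [Nat.testBit_div_two_pow, Nat.testBit_div_two_pow]
  by_cases hj : j + (L - a) < L
  · have := h.getElem (i := a - 1 - j) (by simp; omega)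
    simpa [highBits, show L - 1 - (a - 1 - j) = j + (L - a) by omega] using this
  · have hL : 2 ^ L ≤ 2 ^ (j + (L - a)) := Nat.pow_le_pow_right two_pos (by omega)
    rw [Nat.testBit_eq_false_of_lt (hm.trans_le hL), Nat.testBit_eq_false_of_lt (hm'.trans_le hL)]

lemma lt_add_of_div_eq_div {m m' d : ℕ} (hd : 0 < d) (h : m / d = m' / d) : m' < m + d := by
  have := Nat.div_add_mod m d
  have := Nat.div_add_mod m' d
  have := Nat.mod_lt m' hd
  rw [h] at *
  omega

theorem exists_prefixFree_of_monotone_of_kraft {ι : Type*} [LinearOrder ι]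
    [LocallyFiniteOrderBot ι] [Fintype ι] (ℓ : ι → ℕ) (hmono : Monotone ℓ) {L : ℕ}
    (hL : ∀ i, ℓ i ≤ L) (hkraft : ∑ i, 2 ^ (L - ℓ i) ≤ 2 ^ L) :
    ∃ c : ι → List Bool, Pairwise (fun i j => ¬ c i <+: c j) ∧ ∀ i, (c i).length = ℓ i := by
  set N : ι → ℕ := fun i => ∑ j ∈ Iio i, 2 ^ (L - ℓ j)
  have hN_add_le : ∀ i, N i + 2 ^ (L - ℓ i) ≤ 2 ^ L := fun i =>
    (sum_Iio_add_eq_sum_Iic i).trans_le <| (sum_le_sum_of_subset (subset_univ _)).trans hkraft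
  have hN_lt : ∀ i, N i < 2 ^ L := fun i =>
    (Nat.lt_add_of_pos_right (by positivity)).trans_le (hN_add_le i)
  have hN_add_le_of_lt : ∀ {i j}, i < j → N i + 2 ^ (L - ℓ i) ≤ N j := fun {i j} hij =>
    (sum_Iio_add_eq_sum_Iic i).trans_le <| sum_le_sum_of_subset fun k hk => by
      simp only [mem_Iic, mem_Iio] at hk ⊢
      exact hk.trans_lt hij
  refine ⟨fun i => highBits L (ℓ i) (N i), fun i j hij hpre => ?_, fun i => length_highBits ..⟩
  have hle : ℓ i ≤ ℓ j := by simpa using hpre.length_le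
  have hdiv := div_eq_div_of_highBits_prefix (hL j) (hN_lt i) (hN_lt j) hpre
  rcases hij.lt_or_gt with hij | hji
  · have := lt_add_of_div_eq_div (by positivity) hdiv
    have := hN_add_le_of_lt hij
    omega
  · have := lt_add_of_div_eq_div (by positivity) hdiv.symm
    have := hN_add_le_of_lt hji
    rw [le_antisymm (hmono hji.le) hle] at this
    omega

theorem exists_equiv_fin_monotone {ι α : Type*} [Fintype ι] [LinearOrder α] (f : ι → α) :
    ∃ e : ι ≃ Fin (Fintype.card ι), Monotone (f ∘ e.symm) := by
  refine ⟨(Fintype.equivFin ι).trans (Tuple.sort (f ∘ (Fintype.equivFin ι).symm)).symm, ?_⟩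
  simpa [Function.comp_assoc] using Tuple.monotone_sort (f ∘ (Fintype.equivFin ι).symm)

theorem exists_prefixFree_of_kraft {ι : Type*} [Fintype ι] (ℓ : ι → ℕ)
    (hkraft : ∑ i, ((2 : ℝ) ^ ℓ i)⁻¹ ≤ 1) :
    ∃ c : ι → List Bool, Pairwise (fun i j => ¬ c i <+: c j) ∧ ∀ i, (c i).length = ℓ i := by
  obtain ⟨e, he⟩ := exists_equiv_fin_monotone ℓ
  set L := univ.sup ℓ
  have hL : ∀ i, ℓ i ≤ L := fun i => le_sup (mem_univ i)
  have hkraftℕ : ∑ i, 2 ^ (L - (ℓ ∘ e.symm) i) ≤ 2 ^ L := by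
    simp only [Function.comp_apply]
    rw [e.symm.sum_comp fun i => 2 ^ (L - ℓ i)]
    have : ∑ i, (2 : ℝ) ^ (L - ℓ i) ≤ 2 ^ L :=
      calc ∑ i, (2 : ℝ) ^ (L - ℓ i) = 2 ^ L * ∑ i, ((2 : ℝ) ^ ℓ i)⁻¹ := by
            rw [mul_sum]
            exact sum_congr rfl fun i _ => pow_sub₀ 2 two_ne_zero (hL i)
        _ ≤ 2 ^ L := mul_le_of_le_one_right (by positivity) hkraft
    exact_mod_cast this
  obtain ⟨c, hc, hlen⟩ :=
    exists_prefixFree_of_monotone_of_kraft (ℓ ∘ e.symm) he (fun _ => hL _) hkraftℕ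
  exact ⟨c ∘ e, hc.comp_of_injective e.injective, fun i => by simp [hlen]⟩

theorem inv_two_pow_ceil_neg_logb_le {q : ℝ} (hq : 0 < q) :
    ((2 : ℝ) ^ ⌈-Real.logb 2 q⌉₊)⁻¹ ≤ q := by
  have : -(⌈-Real.logb 2 q⌉₊ : ℝ) ≤ Real.logb 2 q := by linarith [Nat.le_ceil (-Real.logb 2 q)]
  rwa [Real.le_logb_iff_rpow_le one_lt_two hq, Real.rpow_neg zero_le_two,
    Real.rpow_natCast] at this

theorem ceil_neg_logb_lt_add_one {q : ℝ} (hq : 0 < q) (hq₁ : q ≤ 1) :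
    (⌈-Real.logb 2 q⌉₊ : ℝ) < -Real.logb 2 q + 1 :=
  Nat.ceil_lt_add_one (neg_nonneg.2 (Real.logb_nonpos one_lt_two hq.le hq₁))

/-- Source-coding achievability: if `p` is a pmf on a finite type `𝒳` with `p x > 0` for
all `x`, then there exists a prefix-free binary code `c : 𝒳 → List Bool` (for distinct
`x, y`, `c x` is not a prefix of `c y`) whose expected codeword length satisfies
`∑ₓ p(x)·|c(x)| < H(p) + 1`. -/
theorem exists_prefix_free_code_expected_length_lt_entropy_add_one
    {𝒳 : Type*} [Fintype 𝒳] (p : 𝒳 → ℝ)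
    (hp_pos : ∀ x, 0 < p x) (hp_sum : ∑ x, p x = 1) :
    ∃ c : 𝒳 → List Bool,
      (∀ x y : 𝒳, x ≠ y → ¬ c x <+: c y) ∧
      (∑ x, p x * ((c x).length : ℝ)) < shannonEntropyFin p + 1 := by
  have hp_le_one : ∀ x, p x ≤ 1 := fun x =>
    hp_sum ▸ single_le_sum (fun i _ => (hp_pos i).le) (mem_univ x)
  have hne : (univ : Finset 𝒳).Nonempty := by
    by_contra h
    simp [not_nonempty_iff_eq_empty.1 h] at hp_sum
  obtain ⟨c, hc, hlen⟩ := exists_prefixFree_of_kraft (fun x => ⌈-Real.logb 2 (p x)⌉₊)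
    ((sum_le_sum fun x _ => inv_two_pow_ceil_neg_logb_le (hp_pos x)).trans hp_sum.le)
  refine ⟨c, fun x y hxy => hc hxy, ?_⟩
  calc ∑ x, p x * ((c x).length : ℝ) < ∑ x, p x * (-Real.logb 2 (p x) + 1) :=
        sum_lt_sum_of_nonempty hne fun x _ => by
          rw [hlen]
          exact mul_lt_mul_of_pos_left (ceil_neg_logb_lt_add_one (hp_pos x) (hp_le_one x))
            (hp_pos x)
    _ = shannonEntropyFin p + 1 := by
      simp only [shannonEntropyFin, mul_add, mul_neg, mul_one, sum_add_distrib, hp_sum]
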